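/- arXiv:2410.06837 — 3 statements merged into one kernel-verified Lean document; each statement's English description precedes it below -/
import Mathlib

section
/- For any string S of length n ≥ 1, the number of distinct nonempty strings w with occ_S(w) ≥ 2 and φ_S(w) ≥ 1 is at most n − 1. -/
variable {Γ : Type*} [DecidableEq Γ]

/-- `occ S w` is the number of occurrences of `w` as a contiguous substring of `S`,
i.e., the number of (0-based) indices `i` with `S[i..i+|w|-1] = w`. -/
def occ (S w : List Γ) : ℕ :=
  ((List.range S.length).filter fun i => (S.drop i).take w.length = w).length

/-- `Phi S w` is the set of pairs `(α, β)` of characters such that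
`occ S (αwβ) = occ S (αw) = occ S (wβ) = 1`. -/
def Phi (S w : List Γ) : Set (Γ × Γ) :=
  {p | occ S (p.1 :: (w ++ [p.2])) = 1 ∧ occ S (p.1 :: w) = 1 ∧ occ S (w ++ [p.2]) = 1}

/-- The net frequency of `w` in `S`. -/
noncomputable def phi (S w : List Γ) : ℕ := (Phi S w).ncard

/-- `w` occurs in `S` at position `i`. -/
def Occ (S w : List Γ) (i : ℕ) : Prop := (S.drop i).take w.length = w

instance (S w : List Γ) : DecidablePred (Occ S w) :=
  fun i => inferInstanceAs (Decidable ((S.drop i).take w.length = w))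

lemma occ_eq_card (S w : List Γ) :
    occ S w = ((Finset.range S.length).filter fun i => Occ S w i).card := rfl

lemma Occ.bound {S w : List Γ} {i : ℕ} (h : Occ S w i) (hw : w ≠ []) :
    i + w.length ≤ S.length := by
  have hl := congrArg List.length h
  simp only [List.length_take, List.length_drop] at hl
  have h2 : w.length ≤ S.length - i := by rw [← hl]; exact min_le_right _ _
  have hw' : w.length ≠ 0 := by simpa using hw
  omega

lemma Occ.mem_filter {S w : List Γ} {i : ℕ} (h : Occ S w i) (hw : w ≠ []) :
    i ∈ (Finset.range S.length).filter fun j => Occ S w j := by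
  refine Finset.mem_filter.mpr ⟨Finset.mem_range.mpr ?_, h⟩
  have := h.bound hw
  have hw' : w.length ≠ 0 := by simpa using hw
  omega

lemma occ_unique {S w : List Γ} (hw : w ≠ []) (h : occ S w = 1) {i j : ℕ}
    (hi : Occ S w i) (hj : Occ S w j) : i = j := by
  have hcard : ((Finset.range S.length).filter fun j => Occ S w j).card ≤ 1 := by
    rw [← occ_eq_card]; omega
  exact Finset.card_le_one.mp hcard i (hi.mem_filter hw) j (hj.mem_filter hw)

lemma occ_exists {S w : List Γ} (h : 1 ≤ occ S w) : ∃ i, Occ S w i := by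
  rw [occ_eq_card] at h
  obtain ⟨i, hi⟩ := Finset.card_pos.mp h
  exact ⟨i, (Finset.mem_filter.mp hi).2⟩

lemma occ_two_exists {S w : List Γ} (h : 2 ≤ occ S w) :
    ∃ i j, i ≠ j ∧ Occ S w i ∧ Occ S w j := by
  rw [occ_eq_card] at h
  have h1 : 1 < ((Finset.range S.length).filter fun i => Occ S w i).card := by omega
  obtain ⟨i, hi, j, hj, hij⟩ := Finset.one_lt_card.mp h1
  exact ⟨i, j, hij, (Finset.mem_filter.mp hi).2, (Finset.mem_filter.mp hj).2⟩

lemma Occ.split {S u v : List Γ} {i : ℕ} (h : Occ S (u ++ v) i) :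
    Occ S u i ∧ Occ S v (i + u.length) := by
  unfold Occ at *
  rw [List.length_append] at h
  constructor
  · have h1 := congrArg (List.take u.length) h
    rwa [List.take_take, min_eq_left (Nat.le_add_right _ _), List.take_left] at h1
  · have h2 := congrArg (List.drop u.length) h
    rwa [List.drop_left, List.drop_take, Nat.add_sub_cancel_left, List.drop_drop] at h2

lemma Occ.take {S w : List Γ} {i m : ℕ} (h : Occ S w i) (hm : m ≤ w.length) :
    Occ S (w.take m) i := by
  unfold Occ at *
  rw [List.length_take, min_eq_left hm]
  conv_rhs => rw [← h]
  rw [List.take_take, min_eq_left hm]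

lemma Occ.eq_of_length_eq {S w₁ w₂ : List Γ} {i : ℕ} (h1 : Occ S w₁ i) (h2 : Occ S w₂ i)
    (hl : w₁.length = w₂.length) : w₁ = w₂ := by
  rw [← h1, ← h2, hl]

/-- Key asymmetric lemma: if `α₁w₁β₁` witnesses net frequency of `w₁` at position `i`,
and `w₂` (with `|w₁| ≤ |w₂|`, `occ ≥ 2`) also occurs at `i+1`, then `w₁ = w₂`. -/
lemma key_asym (S : List Γ) {w₁ w₂ : List Γ} {i : ℕ} {α₁ β₁ : Γ}
    (hocc2 : 2 ≤ occ S w₂)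
    (hΦ : (α₁, β₁) ∈ Phi S w₁)
    (hi1 : Occ S (α₁ :: (w₁ ++ [β₁])) i)
    (hi2 : Occ S w₂ (i + 1))
    (hlen : w₁.length ≤ w₂.length) : w₁ = w₂ := by
  -- w₁ ++ [β₁] occurs at i + 1
  have h1 : Occ S (w₁ ++ [β₁]) (i + 1) := by
    have := (Occ.split (S := S) (u := [α₁]) (v := w₁ ++ [β₁]) hi1).2
    simpa using this
  rcases eq_or_lt_of_le hlen with heq | hlt
  · -- equal lengths: both occur at i+1
    have hw1 : Occ S w₁ (i + 1) := by
      have := h1.take (m := w₁.length) (by simp)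
      rwa [List.take_left] at this
    exact hw1.eq_of_length_eq hi2 heq
  · -- strict: w₁ ++ [β₁] is a prefix of w₂
    exfalso
    have hpre : w₂.take (w₁.length + 1) = w₁ ++ [β₁] := by
      have ha : Occ S (w₂.take (w₁.length + 1)) (i + 1) := hi2.take (by omega)
      exact ha.eq_of_length_eq h1 (by simp; omega)
    obtain ⟨j₁, j₂, hne, hj₁, hj₂⟩ := occ_two_exists hocc2
    have hone : occ S (w₁ ++ [β₁]) = 1 := hΦ.2.2
    have huniq : ∀ j, Occ S w₂ j → j = i + 1 := by
      intro j hj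
      have : Occ S (w₁ ++ [β₁]) j := by
        have := hj.take (m := w₁.length + 1) (by omega)
        rwa [hpre] at this
      exact occ_unique (by simp) hone this h1
    exact hne ((huniq _ hj₁).trans (huniq _ hj₂).symm)

/-- For a string `S` of length `n ≥ 1`, the number of distinct nonempty
strings `w` with `occ S w ≥ 2` and `phi S w ≥ 1` is at most `n - 1`. -/
theorem stmt1 (S : List Γ) (hn : 1 ≤ S.length) :
    {w : List Γ | w ≠ [] ∧ 2 ≤ occ S w ∧ 1 ≤ phi S w}.Finite ∧
    {w : List Γ | w ≠ [] ∧ 2 ≤ occ S w ∧ 1 ≤ phi S w}.ncard ≤ S.length - 1 := by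
  set s : Set (List Γ) := {w : List Γ | w ≠ [] ∧ 2 ≤ occ S w ∧ 1 ≤ phi S w} with hs
  set g : List Γ → Set ℕ :=
    fun w => {i | ∃ α β : Γ, (α, β) ∈ Phi S w ∧ Occ S (α :: (w ++ [β])) i} with hg
  set F : List Γ → ℕ := fun w => sInf (g w) with hF
  have hmem : ∀ w ∈ s, F w ∈ g w := by
    intro w hw
    obtain ⟨hne, hocc, hphi⟩ := hw
    have hΦne : (Phi S w).Nonempty := Set.nonempty_of_ncard_ne_zero (by
      change phi S w ≠ 0; omega)
    obtain ⟨⟨α, β⟩, hp⟩ := hΦne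
    obtain ⟨i, hi⟩ := occ_exists (w := α :: (w ++ [β])) (by rw [hp.1])
    exact Nat.sInf_mem ⟨i, α, β, hp, hi⟩
  have hbound : ∀ w ∈ s, F w ∈ (Finset.range (S.length - 1) : Finset ℕ) := by
    intro w hw
    obtain ⟨α, β, hp, hi⟩ := hmem w hw
    have hb := hi.bound (by simp)
    have hwl : w.length ≠ 0 := by simpa using hw.1
    simp only [List.length_cons, List.length_append, List.length_singleton] at hb
    exact Finset.mem_range.mpr (by omega)
  have hinj : Set.InjOn F s := by
    intro w₁ hw₁ w₂ hw₂ hFeq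
    obtain ⟨α₁, β₁, hp₁, hi₁⟩ := hmem w₁ hw₁
    obtain ⟨α₂, β₂, hp₂, hi₂⟩ := hmem w₂ hw₂
    rw [hFeq] at hi₁
    have ho₂ : Occ S w₂ (F w₂ + 1) := by
      have h := (Occ.split (S := S) (u := [α₂]) (v := w₂ ++ [β₂]) hi₂).2
      simp only [List.length_singleton] at h
      have := h.take (m := w₂.length) (by simp)
      rwa [List.take_left] at this
    have ho₁ : Occ S w₁ (F w₂ + 1) := by
      have h := (Occ.split (S := S) (u := [α₁]) (v := w₁ ++ [β₁]) hi₁).2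
      simp only [List.length_singleton] at h
      have := h.take (m := w₁.length) (by simp)
      rwa [List.take_left] at this
    rcases le_total w₁.length w₂.length with hle | hle
    · exact key_asym S hw₂.2.1 hp₁ hi₁ ho₂ hle
    · exact (key_asym S hw₁.2.1 hp₂ hi₂ ho₁ hle).symm
  have himg : F '' s ⊆ (Finset.range (S.length - 1) : Finset ℕ) := by
    rintro _ ⟨w, hw, rfl⟩
    exact hbound w hw
  have hfin : s.Finite :=
    Set.Finite.of_finite_image ((Finset.range (S.length - 1)).finite_toSet.subset himg) hinj
  refine ⟨hfin, ?_⟩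
  calc s.ncard = (F '' s).ncard := (Set.ncard_image_of_injOn hinj).symm
    _ ≤ ((Finset.range (S.length - 1) : Finset ℕ) : Set ℕ).ncard :=
        Set.ncard_le_ncard himg (Finset.range (S.length - 1)).finite_toSet
    _ = S.length - 1 := by rw [Set.ncard_coe_finset, Finset.card_range]
end

section
/- Let S be a string of length n ≥ 2 whose last character $ = S[n] occurs at no other position of S. If w is a nonempty string with occ_S(w) ≥ 2 and (α, $) ∈ Φ_S(w) for some character α, then w is the longest nonempty suffix of S[1..n−1] that occurs at least twice in S, and α = S[n−1−|w|]. In particular, there is at most one nonempty string w with occ_S(w) ≥ 2 whose set Φ_S(w) contains a pair with second component $, and for this w there is at most one such character α. -/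
variable {Γ : Type*} [DecidableEq Γ]

/-!
Since `$` occurs in `S` only as its last character, the unique occurrence of `αw$` must be the
suffix of `S`, so `αw` is a suffix of `S[1..n-1]`. A repeated suffix `w'` of `S[1..n-1]` longer
than `w` would end with `αw`, and every occurrence of `w'` would give one of `αw`, contradicting
`occ_S(αw) = 1`.
-/

open Finset

theorem occ_eq_card_s7 (S w : List Γ) :
    occ S w = #{i ∈ range S.length | w <+: S.drop i} := by
  simp only [List.prefix_iff_eq_take, eq_comm (a := w)]
  rfl

theorem occ_le_length (S w : List Γ) : occ S w ≤ S.length :=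
  (List.length_filter_le _ _).trans_eq List.length_range

theorem isInfix_of_occ_ne_zero {S w : List Γ} (h : occ S w ≠ 0) : w <:+: S := by
  obtain ⟨i, hi⟩ := card_ne_zero.mp (occ_eq_card_s7 S w ▸ h)
  exact (mem_filter.mp hi).2.isInfix.trans (S.drop_suffix i).isInfix

theorem occ_append_le (S u v : List Γ) : occ S (u ++ v) ≤ occ S v := by
  rcases v.eq_nil_or_concat' with rfl | ⟨v', a, rfl⟩
  · simpa [occ_eq_card_s7] using occ_le_length S u
  rw [occ_eq_card_s7, occ_eq_card_s7]
  refine card_le_card_of_injOn (· + u.length) (fun i hi => ?_) fun _ _ _ _ => Nat.add_right_cancel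
  simp only [coe_filter, mem_range, Set.mem_ofPred_eq] at hi ⊢
  have hv : v' ++ [a] <+: S.drop (i + u.length) := by
    simpa [List.drop_drop, Nat.add_comm] using hi.2.drop u.length
  refine ⟨?_, hv⟩
  by_contra hlen
  simp [List.drop_eq_nil_of_le (Nat.le_of_not_lt hlen)] at hv

theorem List.suffix_of_append_singleton_isInfix {α : Type*} {l v : List α} {a : α} (ha : a ∉ l)
    (h : v ++ [a] <:+: l ++ [a]) : v <:+ l := by
  obtain ⟨s, t, hst⟩ := h
  rcases t.eq_nil_or_concat' with rfl | ⟨t', b, rfl⟩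
  · exact ⟨s, by simpa [← List.append_assoc] using hst⟩
  · have hl : s ++ v ++ [a] ++ t' = l ∧ b = a := by simpa [← List.append_assoc] using hst
    exact absurd (hl.1 ▸ by simp) ha

theorem stmt7_general (S T : List Γ) (c : Γ) (hS : S = T ++ [c]) (hc : c ∉ T)
    (w : List Γ)
    (α : Γ) (h : (α, c) ∈ Phi S w) :
    w <:+ T ∧
    (∀ w' : List Γ, w' ≠ [] → w' <:+ T → 2 ≤ occ S w' → w'.length ≤ w.length) ∧
    (α :: w) <:+ T := by
  obtain ⟨hαwc, hαw, -⟩ : occ S (α :: (w ++ [c])) = 1 ∧ occ S (α :: w) = 1 ∧ _ := h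
  subst hS
  have hαwT : α :: w <:+ T :=
    List.suffix_of_append_singleton_isInfix hc (isInfix_of_occ_ne_zero (by simp [hαwc]))
  refine ⟨(List.suffix_cons α w).trans hαwT, fun w' _ hw'T hrep' => ?_, hαwT⟩
  by_contra! hlen
  obtain ⟨u, rfl⟩ := List.suffix_of_suffix_length_le hαwT hw'T (by simpa using hlen)
  have := occ_append_le (T ++ [c]) u (α :: w)
  omega

/-- Let `S = T ++ [c]` where the last character `c` occurs at no other
position of `S` (i.e. `c ∉ T`), with `|S| ≥ 2`. If `w` is a nonempty repeat of `S` and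
`(α, c) ∈ Phi S w`, then `w` is the longest nonempty suffix of `T = S[1..n-1]` that
occurs at least twice in `S`, and `α` is the character preceding that suffix
(i.e. `α = S[n-1-|w|]`, expressed as: `αw` is a suffix of `T`). -/
theorem stmt7 (S T : List Γ) (c : Γ) (hS : S = T ++ [c]) (hc : c ∉ T)
    (hn : 2 ≤ S.length)
    (w : List Γ) (hw : w ≠ []) (hrep : 2 ≤ occ S w)
    (α : Γ) (h : (α, c) ∈ Phi S w) :
    w <:+ T ∧
    (∀ w' : List Γ, w' ≠ [] → w' <:+ T → 2 ≤ occ S w' → w'.length ≤ w.length) ∧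
    (α :: w) <:+ T :=
  stmt7_general S T c hS hc w α h
end

section
/- Let S be a string, a a character, and w a nonempty string with occ_S(w) ≥ 2. If (α, β) ∈ Φ_{aS}(w) but (α, β) ∉ Φ_S(w), then α = a, w is a prefix of S, occ_S(aw) = 0, β = S[|w|+1], and occ_S(wβ) = 1 (so w is the longest prefix of S that occurs at least twice in S). In particular, at most one string w that occurs at least twice in S can gain a new pair in Φ when the character a is prepended to S. -/
/-!
Prepending `a` to `S` adds exactly one occurrence of each prefix of `a :: S` and changes nothing
else, so a pair can only enter `Φ` because one of `αwβ`, `αw`, `wβ` is a prefix of `a :: S` with no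
occurrence in `S`. Since occurrences of `αwβ` yield occurrences of both `αw` and `wβ`, this forces
`αw` (hence `αwβ`) to be a prefix of `a :: S`: so `α = a`, `occ S (a :: w) = 0` and `wβ` is a prefix
of `S` occurring exactly once. A prefix of `S` longer than `w` extends `wβ`, so it occurs at most once.
-/

variable {Γ : Type*} [DecidableEq Γ]

theorem occ_cons (S : List Γ) (a : Γ) (w : List Γ) :
    occ (a :: S) w = occ S w + if w <+: a :: S then 1 else 0 := by
  unfold occ
  rw [List.length_cons, List.range_succ_eq_map, List.filter_cons, List.filter_map]
  simp only [List.drop_zero, List.drop_succ_cons, Function.comp_def]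
  by_cases h : List.take w.length (a :: S) = w
  · rw [if_pos (List.prefix_iff_eq_take.mpr h.symm)]
    simp [h, Nat.add_comm]
  · rw [if_neg (fun hp => h (List.prefix_iff_eq_take.mp hp).symm)]
    simp [h]

theorem occ_cons_of_prefix {S w : List Γ} {a : Γ} (h : w <+: a :: S) :
    occ (a :: S) w = occ S w + 1 := by
  simp [occ_cons, h]

theorem occ_cons_of_not_prefix {S w : List Γ} {a : Γ} (h : ¬ w <+: a :: S) :
    occ (a :: S) w = occ S w := by
  simp [occ_cons, h]

theorem occ_le_occ_cons (S : List Γ) (a : Γ) (w : List Γ) : occ S w ≤ occ (a :: S) w := by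
  rw [occ_cons]
  exact Nat.le_add_right _ _

theorem occ_le_occ_of_prefix (S : List Γ) {u v : List Γ} (h : u <+: v) :
    occ S v ≤ occ S u := by
  apply List.Sublist.length_le
  apply List.monotone_filter_right
  obtain ⟨t, rfl⟩ := h
  intro i hi
  simp only [decide_eq_true_eq] at *
  have := congrArg (List.take u.length) hi
  rwa [List.take_take, min_eq_left (by simp), List.take_left] at this

/-- Each occurrence of `α :: u` yields one of `u` one position later, and an occurrence of `u` at
position `0` is not of this form. -/
theorem occ_cons_pattern_add_ite_le (S : List Γ) (α : Γ) {u : List Γ} (hu : u ≠ []) :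
    occ S (α :: u) + (if u <+: S then 1 else 0) ≤ occ S u := by
  induction S with
  | nil => simp [occ, hu]
  | cons b S ih =>
    have hshift : (if α :: u <+: b :: S then 1 else 0) ≤ if u <+: S then 1 else 0 := by
      split_ifs with h h' <;> simp_all [List.cons_prefix_cons]
    rw [occ_cons, occ_cons S b u]
    split_ifs at ih hshift ⊢ <;> omega

theorem occ_cons_pattern_le (S : List Γ) (α : Γ) {u : List Γ} (hu : u ≠ []) :
    occ S (α :: u) ≤ occ S u :=
  (Nat.le_add_right _ _).trans (occ_cons_pattern_add_ite_le S α hu)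

theorem one_le_occ_of_prefix {S w : List Γ} (hw : w ≠ []) (h : w <+: S) : 1 ≤ occ S w := by
  cases S with
  | nil => exact absurd (List.prefix_nil.mp h) hw
  | cons b T => rw [occ_cons_of_prefix h]; omega

theorem length_lt_of_occ_lt {S v w : List Γ} (hv : v <+: S) (hw : w <+: S)
    (h : occ S v < occ S w) : w.length < v.length := by
  by_contra! hlen
  exact (occ_le_occ_of_prefix S (List.prefix_of_prefix_length_le hv hw hlen)).not_gt h

theorem stmt9_general (S : List Γ) (a : Γ) (w : List Γ)
    (α β : Γ) (hin : (α, β) ∈ Phi (a :: S) w) (hout : (α, β) ∉ Phi S w) :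
    α = a ∧
    w <+: S ∧
    occ S (a :: w) = 0 ∧
    (w ++ [β]) <+: S ∧
    occ S (w ++ [β]) = 1 ∧
    (∀ w' : List Γ, w' <+: S → 2 ≤ occ S w' → w'.length ≤ w.length) := by
  obtain ⟨hαwβ, hαw, hwβ⟩ := hin
  have hαw_αwβ : α :: w <+: α :: (w ++ [β]) := List.cons_prefix_cons.mpr ⟨rfl, List.prefix_append w [β]⟩
  have hαw_pre : α :: w <+: a :: S := by
    by_contra h
    rw [occ_cons_of_not_prefix h] at hαw
    rw [occ_cons_of_not_prefix fun h' => h (hαw_αwβ.trans h')] at hαwβ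
    by_cases hwβ_pre : w ++ [β] <+: a :: S
    · rw [occ_cons_of_prefix hwβ_pre] at hwβ
      have := occ_cons_pattern_le S α (u := w ++ [β]) (by simp)
      omega
    · rw [occ_cons_of_not_prefix hwβ_pre] at hwβ
      exact hout ⟨hαwβ, hαw, hwβ⟩
  obtain ⟨rfl, hw_pre⟩ := List.cons_prefix_cons.mp hαw_pre
  rw [occ_cons_of_prefix hαw_pre] at hαw
  have hαwβ_pre : α :: (w ++ [β]) <+: α :: S := by
    by_contra h
    rw [occ_cons_of_not_prefix h] at hαwβ
    have := occ_le_occ_of_prefix S hαw_αwβ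
    omega
  have hwβ_pre := (List.cons_prefix_cons.mp hαwβ_pre).2
  have hwβ_occ : occ S (w ++ [β]) = 1 :=
    le_antisymm (hwβ ▸ occ_le_occ_cons S α _) (one_le_occ_of_prefix (by simp) hwβ_pre)
  refine ⟨rfl, hw_pre, by omega, hwβ_pre, hwβ_occ, fun w' hw' hrep' => ?_⟩
  have := length_lt_of_occ_lt hwβ_pre hw' (by omega)
  simp only [List.length_append, List.length_singleton] at this
  omega

/-- If a nonempty repeat `w` of `S` gains a new pair `(α, β)` in `Phi`
when `a` is prepended to `S`, then `α = a`, `w` is a prefix of `S`, `occ S (a::w) = 0`,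
`β = S[|w|+1]` (i.e. `w ++ [β]` is a prefix of `S`), `occ S (w ++ [β]) = 1`, and `w` is
the longest prefix of `S` occurring at least twice in `S`. -/
theorem stmt9 (S : List Γ) (a : Γ) (w : List Γ) (hw : w ≠ [])
    (hrep : 2 ≤ occ S w)
    (α β : Γ) (hin : (α, β) ∈ Phi (a :: S) w) (hout : (α, β) ∉ Phi S w) :
    α = a ∧
    w <+: S ∧
    occ S (a :: w) = 0 ∧
    (w ++ [β]) <+: S ∧
    occ S (w ++ [β]) = 1 ∧
    (∀ w' : List Γ, w' <+: S → 2 ≤ occ S w' → w'.length ≤ w.length) :=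
  stmt9_general S a w α β hin hout
end
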